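/- Fix real numbers q > 1, y ∈ ℝ, and ρ ∈ ℝ such that ρ² ∉ {q^{−n} : n = 0, 1, 2, …} ∪ {0}. Then there is no probability measure μ on ℝ with finite moments of all orders satisfying ∫ H_n(x|q) dμ(x) = ρ^n·H_n(y|q) for all n ≥ 1. -/

import Mathlib

open MeasureTheory Finset

noncomputable section

/-- The `q`-integer `[n]_q = 1 + q + ⋯ + q^{n-1}`. -/
def qInt (q : ℝ) (n : ℕ) : ℝ := ∑ i ∈ Finset.range n, q ^ i

/-- The (renormalized) continuous `q`-Hermite polynomials, as functions:
`H_{-1} = 0`, `H_0 = 1`, `H_{n+1}(x) = x H_n(x) - [n]_q H_{n-1}(x)`. -/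
def qHermite (q : ℝ) : ℕ → ℝ → ℝ
  | 0 => fun _ => 1
  | 1 => fun x => x
  | n + 2 => fun x => x * qHermite q (n + 1) x - qInt q (n + 1) * qHermite q n x

/-! If `μ` existed, its moment functional `L` would satisfy `L (H_m) = ρ^m H_m(y)`. For such an
`L` the Al-Salam–Chihara polynomials `P_n` are orthogonal to every `H_m` with `m < n`, and
`L (P_n²) = [n]_q! (ρ²; q)_n`. As `ρ² > 0` and `ρ² q^j ≠ 1` for all `j` while `ρ² q^j → ∞`, the
factors `1 - ρ² q^j` are never zero and eventually negative, so some `(ρ²; q)_n` is negative,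
contradicting `L (P_n²) = ∫ P_n² dμ ≥ 0`. -/

open Polynomial

lemma qInt_zero (q : ℝ) : qInt q 0 = 0 := by simp [qInt]

lemma qInt_one (q : ℝ) : qInt q 1 = 1 := by simp [qInt]

lemma qInt_add (q : ℝ) (a b : ℕ) : qInt q (a + b) = qInt q a + q ^ a * qInt q b := by
  simp only [qInt, sum_range_add, mul_sum, pow_add]

lemma qInt_pos {q : ℝ} (hq : 0 ≤ q) {n : ℕ} (hn : 0 < n) : 0 < qInt q n :=
  sum_pos' (fun i _ => pow_nonneg hq i) ⟨0, mem_range.mpr hn, by simp⟩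

def qDescFactorial (q : ℝ) (m n : ℕ) : ℝ := ∏ k ∈ range n, qInt q (m - k)

lemma qDescFactorial_zero_right (q : ℝ) (m : ℕ) : qDescFactorial q m 0 = 1 := by
  simp [qDescFactorial]

lemma qDescFactorial_succ_right (q : ℝ) (m n : ℕ) :
    qDescFactorial q m (n + 1) = qDescFactorial q m n * qInt q (m - n) :=
  prod_range_succ _ _

lemma qDescFactorial_succ_succ (q : ℝ) (m n : ℕ) :
    qDescFactorial q (m + 1) (n + 1) = qInt q (m + 1) * qDescFactorial q m n := by
  simp only [qDescFactorial, prod_range_succ', Nat.add_sub_add_right, Nat.sub_zero, mul_comm]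

lemma qDescFactorial_eq_zero_of_lt (q : ℝ) {m n : ℕ} (h : m < n) : qDescFactorial q m n = 0 :=
  prod_eq_zero (mem_range.mpr h) (by simp [qInt_zero])

lemma qDescFactorial_self_pos {q : ℝ} (hq : 0 ≤ q) (n : ℕ) : 0 < qDescFactorial q n n :=
  prod_pos fun k hk => qInt_pos hq (by rw [mem_range] at hk; omega)

def qPochhammer (a q : ℝ) (n : ℕ) : ℝ := ∏ j ∈ range n, (1 - a * q ^ j)

lemma qPochhammer_zero (a q : ℝ) : qPochhammer a q 0 = 1 := by simp [qPochhammer]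

lemma qPochhammer_succ (a q : ℝ) (n : ℕ) :
    qPochhammer a q (n + 1) = qPochhammer a q n * (1 - a * q ^ n) :=
  prod_range_succ _ _

lemma exists_prod_range_neg {R : Type*} [CommRing R] [LinearOrder R] [IsStrictOrderedRing R]
    {f : ℕ → R} {N : ℕ} (hN : f N < 0) (hprod : ∏ j ∈ range N, f j ≠ 0) :
    ∃ n, ∏ j ∈ range n, f j < 0 := by
  rcases hprod.lt_or_gt with h | h
  · exact ⟨N, h⟩
  · exact ⟨N + 1, by rw [prod_range_succ]; exact mul_neg_of_pos_of_neg h hN⟩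

lemma exists_qPochhammer_neg {a q : ℝ} (hq : 1 < q) (ha : 0 ≤ a)
    (haR : a ∉ insert 0 (Set.range fun n : ℕ => (q ^ n)⁻¹)) : ∃ n, qPochhammer a q n < 0 := by
  simp only [Set.mem_insert_iff, Set.mem_range, not_or, not_exists] at haR
  obtain ⟨ha0, hne⟩ := haR
  have ha : 0 < a := lt_of_le_of_ne ha (Ne.symm ha0)
  obtain ⟨N, hN⟩ := pow_unbounded_of_one_lt a⁻¹ hq
  refine exists_prod_range_neg (N := N) ?_ (prod_ne_zero_iff.mpr fun j _ h => hne j ?_)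
  · have := (inv_lt_iff_one_lt_mul₀' ha).mp hN
    linarith
  · exact (eq_inv_of_mul_eq_one_left (by linarith)).symm

def qHermitePoly (q : ℝ) : ℕ → ℝ[X]
  | 0 => 1
  | 1 => X
  | n + 2 => X * qHermitePoly q (n + 1) - C (qInt q (n + 1)) * qHermitePoly q n

def alSalamChihara (q ρ y : ℝ) : ℕ → ℝ[X]
  | 0 => 1
  | 1 => X - C (ρ * y)
  | n + 2 => (X - C (ρ * q ^ (n + 1) * y)) * alSalamChihara q ρ y (n + 1)
      - C (qInt q (n + 1) * (1 - ρ ^ 2 * q ^ n)) * alSalamChihara q ρ y n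

lemma eval_qHermitePoly (q x : ℝ) : ∀ n, (qHermitePoly q n).eval x = qHermite q n x
  | 0 => by simp [qHermitePoly, qHermite]
  | 1 => by simp [qHermitePoly, qHermite]
  | n + 2 => by
      simp [qHermitePoly, qHermite, eval_qHermitePoly q x (n + 1), eval_qHermitePoly q x n]

lemma X_mul_qHermitePoly (q : ℝ) :
    ∀ m, X * qHermitePoly q m = qHermitePoly q (m + 1) + C (qInt q m) * qHermitePoly q (m - 1)
  | 0 => by simp [qHermitePoly, qInt_zero]
  | m + 1 => by simp [qHermitePoly]

def hermiteSpan (q : ℝ) (n : ℕ) : Submodule ℝ ℝ[X] :=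
  Submodule.span ℝ (qHermitePoly q '' Set.Iio n)

lemma qHermitePoly_mem_hermiteSpan (q : ℝ) {m n : ℕ} (h : m < n) :
    qHermitePoly q m ∈ hermiteSpan q n :=
  Submodule.subset_span ⟨m, h, rfl⟩

lemma hermiteSpan_mono (q : ℝ) {m n : ℕ} (h : m ≤ n) : hermiteSpan q m ≤ hermiteSpan q n :=
  Submodule.span_mono (Set.image_mono (Set.Iio_subset_Iio h))

lemma X_mul_mem_hermiteSpan (q : ℝ) {n : ℕ} {p : ℝ[X]} (hp : p ∈ hermiteSpan q n) :
    X * p ∈ hermiteSpan q (n + 1) := by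
  suffices hermiteSpan q n ≤ (hermiteSpan q (n + 1)).comap (LinearMap.mulLeft ℝ X) from this hp
  refine Submodule.span_le.mpr ?_
  rintro _ ⟨m, hm, rfl⟩
  rw [Set.mem_Iio] at hm
  simp only [SetLike.mem_coe, Submodule.mem_comap, LinearMap.mulLeft_apply, X_mul_qHermitePoly,
    ← smul_eq_C_mul]
  exact add_mem (qHermitePoly_mem_hermiteSpan q (by omega))
    (Submodule.smul_mem _ _ (qHermitePoly_mem_hermiteSpan q (by omega)))

lemma alSalamChihara_sub_qHermitePoly_mem_hermiteSpan (q ρ y : ℝ) :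
    ∀ n, alSalamChihara q ρ y n - qHermitePoly q n ∈ hermiteSpan q n
  | 0 => by simp [alSalamChihara, qHermitePoly]
  | 1 => by
      have h : alSalamChihara q ρ y 1 - qHermitePoly q 1 = (-(ρ * y)) • qHermitePoly q 0 := by
        simp [alSalamChihara, qHermitePoly, smul_eq_C_mul, sub_eq_add_neg]
      rw [h]
      exact Submodule.smul_mem _ _ (qHermitePoly_mem_hermiteSpan q one_pos)
  | n + 2 => by
      have ih₁ := alSalamChihara_sub_qHermitePoly_mem_hermiteSpan q ρ y (n + 1)
      have ih₀ := alSalamChihara_sub_qHermitePoly_mem_hermiteSpan q ρ y n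
      have mem₁ : alSalamChihara q ρ y (n + 1) ∈ hermiteSpan q (n + 2) := by
        simpa using add_mem (hermiteSpan_mono q (by omega) ih₁)
          (qHermitePoly_mem_hermiteSpan q (by omega : n + 1 < n + 2))
      have mem₀ : alSalamChihara q ρ y n ∈ hermiteSpan q (n + 2) := by
        simpa using add_mem (hermiteSpan_mono q (by omega) ih₀)
          (qHermitePoly_mem_hermiteSpan q (by omega : n < n + 2))
      have h : alSalamChihara q ρ y (n + 2) - qHermitePoly q (n + 2)
          = X * (alSalamChihara q ρ y (n + 1) - qHermitePoly q (n + 1))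
            - (ρ * q ^ (n + 1) * y) • alSalamChihara q ρ y (n + 1)
            - (qInt q (n + 1) * (1 - ρ ^ 2 * q ^ n)) • alSalamChihara q ρ y n
            + qInt q (n + 1) • qHermitePoly q n := by
        simp only [alSalamChihara, qHermitePoly, smul_eq_C_mul]
        ring
      rw [h]
      refine add_mem (sub_mem (sub_mem (X_mul_mem_hermiteSpan q ih₁) ?_) ?_) ?_
      · exact Submodule.smul_mem _ _ mem₁
      · exact Submodule.smul_mem _ _ mem₀
      · exact Submodule.smul_mem _ _ (qHermitePoly_mem_hermiteSpan q (by omega))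

/-- The value of `L (H_m P_n)`. For `m < n` it vanishes through the factor `[0]_q` of
`qDescFactorial q m n`, which makes the truncated `m - n` harmless. -/
def mixedMoment (q ρ y : ℝ) (m n : ℕ) : ℝ :=
  ρ ^ (m - n) * qHermite q (m - n) y * qDescFactorial q m n * qPochhammer (ρ ^ 2) q n

lemma mixedMoment_eq_zero_of_lt (q ρ y : ℝ) {m n : ℕ} (h : m < n) : mixedMoment q ρ y m n = 0 := by
  simp [mixedMoment, qDescFactorial_eq_zero_of_lt q h]

lemma mixedMoment_self (q ρ y : ℝ) (n : ℕ) :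
    mixedMoment q ρ y n n = qDescFactorial q n n * qPochhammer (ρ ^ 2) q n := by
  simp [mixedMoment, qHermite]

lemma mixedMoment_add_succ_succ (q ρ y : ℝ) (n s : ℕ) :
    mixedMoment q ρ y (n + 2 + s) (n + 2) = mixedMoment q ρ y (n + 2 + s + 1) (n + 1)
      + qInt q (n + 2 + s) * mixedMoment q ρ y (n + 2 + s - 1) (n + 1)
      - ρ * q ^ (n + 1) * y * mixedMoment q ρ y (n + 2 + s) (n + 1)
      - qInt q (n + 1) * (1 - ρ ^ 2 * q ^ n) * mixedMoment q ρ y (n + 2 + s) n := by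
  set D := qDescFactorial q (n + 2 + s) n
  have h₁ : qDescFactorial q (n + 2 + s) (n + 1) = D * qInt q (s + 2) := by
    rw [qDescFactorial_succ_right, show n + 2 + s - n = s + 2 by omega]
  have h₂ : qDescFactorial q (n + 2 + s) (n + 2) = D * qInt q (s + 2) * qInt q (s + 1) := by
    rw [qDescFactorial_succ_right _ _ (n + 1), h₁, show n + 2 + s - (n + 1) = s + 1 by omega]
  have h₃ : qInt q (n + 2 + s) * qDescFactorial q (n + 2 + s - 1) (n + 1)
      = D * qInt q (s + 2) * qInt q (s + 1) := by
    have := qDescFactorial_succ_succ q (n + 2 + s - 1) (n + 1)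
    rw [Nat.sub_add_cancel (by omega : 1 ≤ n + 2 + s)] at this
    rw [← this, h₂]
  have hInt : qInt q (n + 2 + s + 1) = qInt q (n + 1) + q ^ (n + 1) * qInt q (s + 2) := by
    rw [← qInt_add, show n + 1 + (s + 2) = n + 2 + s + 1 by omega]
  have hH : qHermite q (s + 2) y = y * qHermite q (s + 1) y - qInt q (s + 1) * qHermite q s y :=
    rfl
  simp only [mixedMoment, show n + 2 + s - (n + 2) = s by omega,
    show n + 2 + s + 1 - (n + 1) = s + 2 by omega, show n + 2 + s - 1 - (n + 1) = s by omega,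
    show n + 2 + s - (n + 1) = s + 1 by omega, show n + 2 + s - n = s + 2 by omega, h₁, h₂,
    qDescFactorial_succ_succ, hInt, hH, qPochhammer_succ]
  linear_combination
    (-(ρ ^ s * qHermite q s y * (qPochhammer (ρ ^ 2) q n * (1 - ρ ^ 2 * q ^ n)))) * h₃

lemma mixedMoment_succ_succ (q ρ y : ℝ) (m n : ℕ) :
    mixedMoment q ρ y m (n + 2) = mixedMoment q ρ y (m + 1) (n + 1)
      + qInt q m * mixedMoment q ρ y (m - 1) (n + 1)
      - ρ * q ^ (n + 1) * y * mixedMoment q ρ y m (n + 1)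
      - qInt q (n + 1) * (1 - ρ ^ 2 * q ^ n) * mixedMoment q ρ y m n := by
  obtain hmn | rfl | rfl | hmn : m < n ∨ m = n ∨ m = n + 1 ∨ n + 2 ≤ m := by omega
  · simp only [mixedMoment, qDescFactorial_eq_zero_of_lt q (by omega : m < n + 2),
      qDescFactorial_eq_zero_of_lt q (by omega : m + 1 < n + 1),
      qDescFactorial_eq_zero_of_lt q (by omega : m - 1 < n + 1),
      qDescFactorial_eq_zero_of_lt q (by omega : m < n + 1), qDescFactorial_eq_zero_of_lt q hmn]
    ring
  · simp only [mixedMoment, qDescFactorial_eq_zero_of_lt q (by omega : m < m + 2),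
      qDescFactorial_eq_zero_of_lt q (by omega : m - 1 < m + 1),
      qDescFactorial_eq_zero_of_lt q (by omega : m < m + 1), qDescFactorial_succ_succ,
      qPochhammer_succ, Nat.sub_self]
    ring
  · have hD : qDescFactorial q (n + 1) (n + 1) = qDescFactorial q (n + 1) n := by
      rw [qDescFactorial_succ_right, Nat.add_sub_cancel_left, qInt_one, mul_one]
    simp only [mixedMoment, qDescFactorial_eq_zero_of_lt q (by omega : n + 1 < n + 2),
      qDescFactorial_eq_zero_of_lt q (by omega : n + 1 - 1 < n + 1), hD, qDescFactorial_succ_succ,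
      qPochhammer_succ, qInt_add q (n + 1) 1, qInt_one,
      show n + 1 + 1 - (n + 1) = 1 by omega, show n + 1 - n = 1 by omega, Nat.sub_self, qHermite]
    ring
  · obtain ⟨s, rfl⟩ := Nat.exists_eq_add_of_le hmn
    exact mixedMoment_add_succ_succ q ρ y n s

section MomentFunctional

variable {q ρ y : ℝ} (L : ℝ[X] →ₗ[ℝ] ℝ) (hL : ∀ m, L (qHermitePoly q m) = ρ ^ m * qHermite q m y)
include hL

theorem map_qHermitePoly_mul_alSalamChihara :
    ∀ n m, L (qHermitePoly q m * alSalamChihara q ρ y n) = mixedMoment q ρ y m n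
  | 0, m => by simp [alSalamChihara, mixedMoment, hL, qDescFactorial_zero_right, qPochhammer_zero]
  | 1, m => by
      have h : qHermitePoly q m * alSalamChihara q ρ y 1 = qHermitePoly q (m + 1)
          + qInt q m • qHermitePoly q (m - 1) - (ρ * y) • qHermitePoly q m := by
        rw [alSalamChihara, smul_eq_C_mul, smul_eq_C_mul, ← X_mul_qHermitePoly]
        ring
      rw [h, map_sub, map_add, map_smul, map_smul, hL, hL, hL, smul_eq_mul, smul_eq_mul]
      rcases m with _ | m
      · simp [mixedMoment, qInt_zero, qDescFactorial_eq_zero_of_lt, qHermite]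
      · simp only [mixedMoment, qHermite, add_tsub_cancel_right, qDescFactorial_succ_succ,
          qDescFactorial_zero_right, mul_one, qPochhammer_succ, qPochhammer_zero, pow_zero, one_mul]
        ring
  | n + 2, m => by
      have h : qHermitePoly q m * alSalamChihara q ρ y (n + 2)
          = qHermitePoly q (m + 1) * alSalamChihara q ρ y (n + 1)
            + qInt q m • (qHermitePoly q (m - 1) * alSalamChihara q ρ y (n + 1))
            - (ρ * q ^ (n + 1) * y) • (qHermitePoly q m * alSalamChihara q ρ y (n + 1))
            - (qInt q (n + 1) * (1 - ρ ^ 2 * q ^ n)) •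
                (qHermitePoly q m * alSalamChihara q ρ y n) := by
        rw [alSalamChihara, smul_eq_C_mul, smul_eq_C_mul, smul_eq_C_mul]
        linear_combination alSalamChihara q ρ y (n + 1) * X_mul_qHermitePoly q m
      simp only [h, map_sub, map_add, map_smul, smul_eq_mul, mixedMoment_succ_succ,
        map_qHermitePoly_mul_alSalamChihara (n + 1), map_qHermitePoly_mul_alSalamChihara n]

theorem map_alSalamChihara_mul_self (n : ℕ) :
    L (alSalamChihara q ρ y n * alSalamChihara q ρ y n)
      = qDescFactorial q n n * qPochhammer (ρ ^ 2) q n := by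
  have hspan :
      hermiteSpan q n ≤ LinearMap.ker (L ∘ₗ LinearMap.mulRight ℝ (alSalamChihara q ρ y n)) :=
    Submodule.span_le.mpr fun _ ⟨m, hm, hp⟩ => by
      subst hp
      simpa [map_qHermitePoly_mul_alSalamChihara L hL] using mixedMoment_eq_zero_of_lt q ρ y hm
  have hsub := hspan (alSalamChihara_sub_qHermitePoly_mem_hermiteSpan q ρ y n)
  rw [LinearMap.mem_ker, LinearMap.comp_apply, LinearMap.mulRight_apply, sub_mul, map_sub,
    sub_eq_zero] at hsub
  rw [hsub, map_qHermitePoly_mul_alSalamChihara L hL, mixedMoment_self]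

end MomentFunctional

lemma integrable_eval_of_integrable_pow {μ : Measure ℝ}
    (hμ : ∀ n : ℕ, Integrable (fun x => x ^ n) μ) (p : ℝ[X]) :
    Integrable (fun x => p.eval x) μ := by
  induction p using Polynomial.induction_on' with
  | add p r hp hr => simpa only [eval_add] using hp.fun_add hr
  | monomial n a => simpa only [eval_monomial] using (hμ n).const_mul a

def momentFunctional (μ : Measure ℝ) (hμ : ∀ n : ℕ, Integrable (fun x => x ^ n) μ) :
    ℝ[X] →ₗ[ℝ] ℝ where
  toFun p := ∫ x, p.eval x ∂μ
  map_add' p r := by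
    simp only [eval_add]
    exact integral_add (integrable_eval_of_integrable_pow hμ p)
      (integrable_eval_of_integrable_pow hμ r)
  map_smul' c p := by
    simp only [eval_smul, smul_eq_mul, RingHom.id_apply]
    exact integral_const_mul c _

lemma momentFunctional_apply {μ : Measure ℝ} (hμ : ∀ n : ℕ, Integrable (fun x => x ^ n) μ)
    (p : ℝ[X]) : momentFunctional μ hμ p = ∫ x, p.eval x ∂μ :=
  rfl

lemma momentFunctional_mul_self_nonneg {μ : Measure ℝ}
    (hμ : ∀ n : ℕ, Integrable (fun x => x ^ n) μ) (p : ℝ[X]) : 0 ≤ momentFunctional μ hμ (p * p) :=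
  integral_nonneg fun x => by simpa only [Pi.zero_apply, eval_mul] using mul_self_nonneg (p.eval x)

/-- Corollary (i): for `q > 1`, if `ρ² ∉ {1, 1/q, 1/q², …} ∪ {0}`, then there is no
probability measure `μ` on `ℝ` with finite moments of all orders satisfying
`∫ H_n(x|q) dμ(x) = ρ^n H_n(y|q)` for all `n ≥ 1`. -/
theorem no_solution_of_not_mem_Rq (q y ρ : ℝ) (hq : 1 < q)
    (hρ : ρ ^ 2 ∉ insert (0 : ℝ) (Set.range fun n : ℕ => (q ^ n)⁻¹)) :
    ¬ ∃ μ : Measure ℝ, IsProbabilityMeasure μ ∧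
        (∀ n : ℕ, Integrable (fun x => x ^ n) μ) ∧
        (∀ n : ℕ, 1 ≤ n → ∫ x, qHermite q n x ∂μ = ρ ^ n * qHermite q n y) := by
  rintro ⟨μ, hprob, hmom, hH⟩
  have hL : ∀ m, momentFunctional μ hmom (qHermitePoly q m) = ρ ^ m * qHermite q m y := by
    rintro (_ | m)
    · simp [momentFunctional_apply, qHermitePoly, qHermite]
    · simpa only [momentFunctional_apply, eval_qHermitePoly] using hH (m + 1) m.succ_pos
  obtain ⟨n, hn⟩ := exists_qPochhammer_neg hq (sq_nonneg ρ) hρ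
  have hnonneg := momentFunctional_mul_self_nonneg hmom (alSalamChihara q ρ y n)
  rw [map_alSalamChihara_mul_self _ hL] at hnonneg
  have hfact := qDescFactorial_self_pos (zero_le_one.trans hq.le) n
  nlinarith
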